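/- Let ‖·‖ be a norm on ℝ^d with closed balls B(x,r), let K : ℝ^d → [0,∞) be a symmetric kernel with tail function κ∞ with respect to ‖·‖, and let P be a λ^d-absolutely continuous probability measure on ℝ^d that is normal at some level ρ ≥ 0. If x ∈ ℝ^d and σ > 0 satisfy B(x, σ) ⊆ ℝ^d ∖ M_ρ, then for every δ > 0 we have h_{P,δ}(x) < ρ + δ^{−d}·κ∞(σ/δ). -/

import Mathlib

/-!
Write `h_{P,δ}(x) = δ^{-d} ∫ K(δ⁻¹(x - y)) h(y) dy` and split the integral at the ball
`B = B(x, σ)`. Since `B` misses `M_ρ` and `ℝ^d` is hereditarily Lindelöf, `h < ρ` almost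
everywhere on `B`; as the weight `K(δ⁻¹(x - ·))` is positive on a neighbourhood of `x`, the
ball contributes strictly less than `ρ ∫ K(δ⁻¹(x - y)) dy = ρ δ^d`. Off `B` the weight is at
most `κ∞(σ/δ)`, and `h` has total mass one.
-/

open MeasureTheory ENNReal

noncomputable section

/-- `N` is a norm on `ℝ^d`. -/
structure IsNormOn (d : ℕ) (N : (Fin d → ℝ) → ℝ) : Prop where
  eq_zero_iff : ∀ x, N x = 0 ↔ x = 0
  smul : ∀ (a : ℝ) (x : Fin d → ℝ), N (a • x) = |a| * N x
  triangle : ∀ x y, N (x + y) ≤ N x + N y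

/-- A symmetric kernel on `ℝ^d`: a bounded measurable function `K : ℝ^d → [0,∞)` that is
strictly positive in a neighborhood of `0`, even, and integrates to `1` with respect to
Lebesgue measure. -/
structure IsSymmKernel (d : ℕ) (K : (Fin d → ℝ) → ℝ) : Prop where
  measurable : Measurable K
  nonneg : ∀ x, 0 ≤ K x
  bddAbove : BddAbove (Set.range K)
  pos_near_zero : ∀ᶠ x in nhds (0 : Fin d → ℝ), 0 < K x
  symm : ∀ x, K (-x) = K x
  integral_one : ∫ x, K x = 1

/-- The tail function `κ₁(r) := ∫_{ℝ^d ∖ B(0,r)} K dλ^d` of a kernel `K`, with respect to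
the norm `N`. -/
def kappaOne (d : ℕ) (N K : (Fin d → ℝ) → ℝ) (r : ℝ) : ℝ :=
  ∫ x in {x : Fin d → ℝ | r < N x}, K x

/-- The tail function `κ∞(r) := sup_{x ∈ ℝ^d ∖ B(0,r)} K x` of a kernel `K`, with respect
to the norm `N`. -/
def kappaInf (d : ℕ) (N K : (Fin d → ℝ) → ℝ) (r : ℝ) : ℝ :=
  sSup (K '' {x : Fin d → ℝ | r < N x})

/-- The infinite-sample kernel density estimator
`h_{P,δ}(x) := δ^{−d} ∫ K((x−y)/δ) dP(y)`. -/
def kdeP (d : ℕ) (K : (Fin d → ℝ) → ℝ) (δ : ℝ) (P : Measure (Fin d → ℝ))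
    (x : Fin d → ℝ) : ℝ :=
  (δ ^ d)⁻¹ * ∫ y, K (δ⁻¹ • (x - y)) ∂P

/-- `h` is a Lebesgue density of the measure `P` on `ℝ^d`. -/
def IsDensityOf (d : ℕ) (P : Measure (Fin d → ℝ)) (h : (Fin d → ℝ) → ℝ) : Prop :=
  Measurable h ∧ (∀ x, 0 ≤ h x) ∧ P = volume.withDensity fun x => ENNReal.ofReal (h x)

/-- `M_ρ`: the support of the measure `A ↦ λ^d(A ∩ {h ≥ ρ})`, i.e. the set of points all
of whose open neighborhoods intersect `{h ≥ ρ}` in a set of positive Lebesgue measure. -/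
def Mset (d : ℕ) (h : (Fin d → ℝ) → ℝ) (ρ : ℝ) : Set (Fin d → ℝ) :=
  {x | ∀ U : Set (Fin d → ℝ), IsOpen U → x ∈ U → 0 < volume (U ∩ {y | ρ ≤ h y})}

/-- `P` (with density `h`) is normal at level `ρ`: there are densities `h₁, h₂` of `P` with
`λ^d(M_ρ ∖ {h₁ ≥ ρ}) = 0` and `λ^d({h₂ > ρ} ∖ int M_ρ) = 0`. -/
def NormalAtLevel (d : ℕ) (P : Measure (Fin d → ℝ)) (h : (Fin d → ℝ) → ℝ) (ρ : ℝ) : Prop :=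
  ∃ h₁ h₂, IsDensityOf d P h₁ ∧ IsDensityOf d P h₂ ∧
    volume (Mset d h ρ \ {x | ρ ≤ h₁ x}) = 0 ∧
    volume ({x | ρ < h₂ x} \ interior (Mset d h ρ)) = 0

namespace IsNormOn

variable {d : ℕ} {N : (Fin d → ℝ) → ℝ}

theorem map_zero (hN : IsNormOn d N) : N 0 = 0 := (hN.eq_zero_iff 0).2 rfl

theorem map_neg (hN : IsNormOn d N) (x : Fin d → ℝ) : N (-x) = N x := by
  simpa using hN.smul (-1) x

theorem map_sub_rev (hN : IsNormOn d N) (x y : Fin d → ℝ) : N (x - y) = N (y - x) := by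
  rw [← hN.map_neg, neg_sub]

theorem convexOn (hN : IsNormOn d N) : ConvexOn ℝ Set.univ N := by
  refine ⟨convex_univ, fun x _ y _ a b ha hb _ => ?_⟩
  calc N (a • x + b • y) ≤ N (a • x) + N (b • y) := hN.triangle _ _
    _ = a • N x + b • N y := by rw [hN.smul, hN.smul, abs_of_nonneg ha, abs_of_nonneg hb]; rfl

theorem continuous (hN : IsNormOn d N) : Continuous N :=
  hN.convexOn.locallyLipschitz.continuous

theorem measurableSet_closedBall (hN : IsNormOn d N) (x : Fin d → ℝ) (r : ℝ) :
    MeasurableSet {y | N (y - x) ≤ r} :=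
  (isClosed_le (hN.continuous.comp (continuous_sub_right x)) continuous_const).measurableSet

theorem closedBall_mem_nhds (hN : IsNormOn d N) (x : Fin d → ℝ) {r : ℝ} (hr : 0 < r) :
    {y | N (y - x) ≤ r} ∈ nhds x := by
  have hcont :=
    (hN.continuous.comp (continuous_sub_right x)).tendsto' x 0 (by simp [hN.map_zero])
  exact (hcont.eventually_le_const hr).mono fun _ => id

end IsNormOn

namespace IsSymmKernel

variable {d : ℕ} {K : (Fin d → ℝ) → ℝ}

theorem integrable (hK : IsSymmKernel d K) : Integrable K :=
  .of_integral_ne_zero (by simp [hK.integral_one])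

theorem integrable_comp_smul_sub (hK : IsSymmKernel d K) {δ : ℝ} (hδ : δ ≠ 0)
    (x : Fin d → ℝ) : Integrable fun y => K (δ⁻¹ • (x - y)) :=
  ((integrable_comp_smul_iff volume K (inv_ne_zero hδ)).2 hK.integrable).comp_sub_left x

theorem integral_comp_smul_sub (hK : IsSymmKernel d K) {δ : ℝ} (hδ : 0 < δ)
    (x : Fin d → ℝ) : ∫ y, K (δ⁻¹ • (x - y)) = δ ^ d := by
  rw [integral_sub_left_eq_self (fun z => K (δ⁻¹ • z)), Measure.integral_comp_smul,
    hK.integral_one, Module.finrank_fin_fun, inv_pow, inv_inv, abs_of_pos (by positivity),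
    smul_eq_mul, mul_one]

theorem integrable_comp_mul (hK : IsSymmKernel d K) {α : Type*} [MeasurableSpace α]
    {μ : Measure α} {f : α → Fin d → ℝ} (hf : Measurable f) {g : α → ℝ} (hg : Integrable g μ) :
    Integrable (fun y => K (f y) * g y) μ := by
  obtain ⟨C, hC⟩ := hK.bddAbove
  refine hg.bdd_mul (c := C) (hK.measurable.comp hf).aestronglyMeasurable
    (ae_of_all _ fun y => ?_)
  rw [Real.norm_of_nonneg (hK.nonneg _)]
  exact hC ⟨f y, rfl⟩

end IsSymmKernel

section Tail

variable {d : ℕ} {N K : (Fin d → ℝ) → ℝ}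

theorem kappaInf_nonneg (hK : IsSymmKernel d K) (r : ℝ) : 0 ≤ kappaInf d N K r :=
  Real.sSup_nonneg (by rintro _ ⟨z, -, rfl⟩; exact hK.nonneg z)

theorem le_kappaInf (hK : IsSymmKernel d K) {r : ℝ} {z : Fin d → ℝ} (hz : r < N z) :
    K z ≤ kappaInf d N K r :=
  le_csSup (hK.bddAbove.mono (Set.image_subset_range K _)) ⟨z, hz, rfl⟩

end Tail

section Density

variable {d : ℕ} {P : Measure (Fin d → ℝ)} {h : (Fin d → ℝ) → ℝ}

theorem IsDensityOf.nonneg (hP : IsDensityOf d P h) (x : Fin d → ℝ) : 0 ≤ h x := hP.2.1 x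

theorem IsDensityOf.integral_eq (hP : IsDensityOf d P h) (f : (Fin d → ℝ) → ℝ) :
    ∫ y, f y ∂P = ∫ y, f y * h y := by
  obtain ⟨hm, h0, rfl⟩ := hP
  rw [integral_withDensity_eq_integral_toReal_smul hm.ennreal_ofReal
    (ae_of_all _ fun _ => ENNReal.ofReal_lt_top)]
  simp only [ENNReal.toReal_ofReal (h0 _), smul_eq_mul, mul_comm]

theorem IsDensityOf.integral_eq_one [IsProbabilityMeasure P] (hP : IsDensityOf d P h) :
    ∫ y, h y = 1 := by
  simpa using (hP.integral_eq fun _ => 1).symm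

theorem IsDensityOf.integrable [IsProbabilityMeasure P] (hP : IsDensityOf d P h) :
    Integrable h :=
  .of_integral_ne_zero (by simp [hP.integral_eq_one])

end Density

theorem Mset_eq_support {d : ℕ} (h : (Fin d → ℝ) → ℝ) (ρ : ℝ) :
    Mset d h ρ = (volume.restrict {y | ρ ≤ h y}).support := by
  ext x
  rw [Measure.support_eq_forall_isOpen]
  refine forall_congr' fun U => ⟨fun H hxU hU => ?_, fun H hU hxU => ?_⟩
  · rw [Measure.restrict_apply hU.measurableSet]
    exact H hU hxU
  · rw [← Measure.restrict_apply hU.measurableSet]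
    exact H hxU hU

theorem ae_restrict_lt_of_subset_compl_Mset {d : ℕ} {h : (Fin d → ℝ) → ℝ} {ρ : ℝ}
    {S : Set (Fin d → ℝ)} (hS : S ⊆ (Mset d h ρ)ᶜ) : ∀ᵐ y ∂volume.restrict S, h y < ρ := by
  rw [Mset_eq_support] at hS
  refine ae_restrict_of_ae_restrict_of_subset hS (ae_iff.2 ?_)
  have hU := (Measure.isOpen_compl_support (μ := volume.restrict {y | ρ ≤ h y})).measurableSet
  simp only [not_lt]
  rw [Measure.restrict_apply' hU, Set.inter_comm, ← Measure.restrict_apply hU]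
  exact Measure.measure_compl_support

theorem setIntegral_mul_lt_mul_setIntegral {α : Type*} [MeasurableSpace α] {μ : Measure α}
    {s : Set α} {f h : α → ℝ} {ρ : ℝ} (hf : IntegrableOn f s μ)
    (hfh : IntegrableOn (fun y => f y * h y) s μ) (hf0 : ∀ y, 0 ≤ f y)
    (hlt : ∀ᵐ y ∂μ.restrict s, h y < ρ) (hpos : μ.restrict s {y | 0 < f y} ≠ 0) :
    ∫ y in s, f y * h y ∂μ < ρ * ∫ y in s, f y ∂μ := by
  have hgap_int : IntegrableOn (fun y => ρ * f y - f y * h y) s μ := (hf.const_mul ρ).sub hfh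
  have hgap_eq : ∀ y, ρ * f y - f y * h y = f y * (ρ - h y) := fun y => by ring
  have hgap_nonneg : 0 ≤ᵐ[μ.restrict s] fun y => ρ * f y - f y * h y :=
    hlt.mono fun y hy => show 0 ≤ ρ * f y - f y * h y by
      rw [hgap_eq]; exact mul_nonneg (hf0 y) (sub_nonneg.2 hy.le)
  have hgap : 0 < ∫ y in s, ρ * f y - f y * h y ∂μ := by
    rw [integral_pos_iff_support_of_nonneg_ae hgap_nonneg hgap_int, pos_iff_ne_zero]
    refine fun hzero => hpos (measure_mono_null (fun y hy => ?_)
      (measure_union_null hzero (ae_iff.1 hlt)))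
    by_cases hyρ : h y < ρ
    · left
      show ρ * f y - f y * h y ≠ 0
      rw [hgap_eq]
      exact (mul_pos hy (sub_pos.2 hyρ)).ne'
    · exact Or.inr hyρ
  rw [integral_sub (hf.const_mul ρ) hfh, integral_const_mul] at hgap
  linarith

section KernelDensityEstimator

variable {d : ℕ} {N K h : (Fin d → ℝ) → ℝ} {P : Measure (Fin d → ℝ)} [IsProbabilityMeasure P]

theorem setIntegral_closedBall_kernel_mul_density_lt (hN : IsNormOn d N)
    (hK : IsSymmKernel d K) (hdens : IsDensityOf d P h) {ρ : ℝ} (hρ : 0 ≤ ρ)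
    {x : Fin d → ℝ} {σ : ℝ} (hσ : 0 < σ)
    (hball : {y | N (y - x) ≤ σ} ⊆ (Mset d h ρ)ᶜ) {δ : ℝ} (hδ : 0 < δ) :
    ∫ y in {y | N (y - x) ≤ σ}, K (δ⁻¹ • (x - y)) * h y < ρ * δ ^ d := by
  have hKδ := hK.integrable_comp_smul_sub hδ.ne' x
  have hpos : volume.restrict {y | N (y - x) ≤ σ} {y | 0 < K (δ⁻¹ • (x - y))} ≠ 0 := by
    rw [Measure.restrict_apply' (hN.measurableSet_closedBall x σ)]
    refine (Measure.measure_pos_of_mem_nhds volume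
      (Filter.inter_mem ?_ (hN.closedBall_mem_nhds x hσ))).ne'
    have hto : Filter.Tendsto (fun y => δ⁻¹ • (x - y)) (nhds x) (nhds 0) :=
      Continuous.tendsto' (by fun_prop) x 0 (by simp)
    exact hto.eventually hK.pos_near_zero
  calc _ < ρ * ∫ y in {y | N (y - x) ≤ σ}, K (δ⁻¹ • (x - y)) :=
        setIntegral_mul_lt_mul_setIntegral hKδ.integrableOn
          (hK.integrable_comp_mul (by fun_prop) hdens.integrable).integrableOn
          (fun _ => hK.nonneg _) (ae_restrict_lt_of_subset_compl_Mset hball) hpos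
    _ ≤ ρ * δ ^ d := by
        rw [← hK.integral_comp_smul_sub hδ x]
        exact mul_le_mul_of_nonneg_left
          (setIntegral_le_integral hKδ (ae_of_all _ fun _ => hK.nonneg _)) hρ

theorem setIntegral_compl_closedBall_kernel_mul_density_le (hN : IsNormOn d N)
    (hK : IsSymmKernel d K) (hdens : IsDensityOf d P h) (x : Fin d → ℝ) (σ : ℝ)
    {δ : ℝ} (hδ : 0 < δ) :
    ∫ y in {y | N (y - x) ≤ σ}ᶜ, K (δ⁻¹ • (x - y)) * h y ≤ kappaInf d N K (σ / δ) := by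
  set κ := kappaInf d N K (σ / δ)
  have htail : ∀ y ∈ {y | N (y - x) ≤ σ}ᶜ, K (δ⁻¹ • (x - y)) ≤ κ := by
    intro y hy
    apply le_kappaInf hK
    rw [hN.smul, abs_of_pos (inv_pos.2 hδ), hN.map_sub_rev, div_eq_inv_mul]
    exact mul_lt_mul_of_pos_left (not_le.1 hy) (inv_pos.2 hδ)
  have hmass : ∫ y in {y | N (y - x) ≤ σ}ᶜ, h y ≤ 1 :=
    hdens.integral_eq_one ▸ setIntegral_le_integral hdens.integrable (ae_of_all _ hdens.nonneg)
  calc _ ≤ ∫ y in {y | N (y - x) ≤ σ}ᶜ, κ * h y :=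
        setIntegral_mono_on (hK.integrable_comp_mul (by fun_prop) hdens.integrable).integrableOn
          (hdens.integrable.const_mul κ).integrableOn (hN.measurableSet_closedBall x σ).compl
          fun y hy => mul_le_mul_of_nonneg_right (htail y hy) (hdens.nonneg y)
    _ = κ * ∫ y in {y | N (y - x) ≤ σ}ᶜ, h y := integral_const_mul _ _
    _ ≤ κ := mul_le_of_le_one_right (kappaInf_nonneg hK _) hmass

end KernelDensityEstimator

theorem kdeP_upper_bound_of_ball_subset_compl_general {d : ℕ}
    (N : (Fin d → ℝ) → ℝ) (hN : IsNormOn d N)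
    (K : (Fin d → ℝ) → ℝ) (hK : IsSymmKernel d K)
    (P : Measure (Fin d → ℝ)) [IsProbabilityMeasure P]
    (h : (Fin d → ℝ) → ℝ) (hdens : IsDensityOf d P h)
    (ρ : ℝ) (hρ : 0 ≤ ρ)
    (x : Fin d → ℝ) (σ : ℝ) (hσ : 0 < σ)
    (hball : {y : Fin d → ℝ | N (y - x) ≤ σ} ⊆ (Mset d h ρ)ᶜ)
    (δ : ℝ) (hδ : 0 < δ) :
    kdeP d K δ P x < ρ + (δ ^ d)⁻¹ * kappaInf d N K (σ / δ) := by
  have hball_lt := setIntegral_closedBall_kernel_mul_density_lt hN hK hdens hρ hσ hball hδ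
  have htail_le := setIntegral_compl_closedBall_kernel_mul_density_le hN hK hdens x σ hδ
  have hδd : 0 < δ ^ d := pow_pos hδ d
  rw [kdeP, hdens.integral_eq, ← integral_add_compl (hN.measurableSet_closedBall x σ)
    (hK.integrable_comp_mul (by fun_prop) hdens.integrable)]
  calc _ < (δ ^ d)⁻¹ * (ρ * δ ^ d + kappaInf d N K (σ / δ)) :=
      mul_lt_mul_of_pos_left (by linarith) (inv_pos.2 hδd)
    _ = ρ + (δ ^ d)⁻¹ * kappaInf d N K (σ / δ) := by field_simp

/-- Let `‖·‖` be a norm on `ℝ^d` with closed balls `B(x,r)`, `K` a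
symmetric kernel with tail function `κ∞`, and `P` a Lebesgue-absolutely continuous
probability measure on `ℝ^d` that is normal at level `ρ ≥ 0`.  If `B(x,σ) ⊆ ℝ^d ∖ M_ρ`
for some `x ∈ ℝ^d`, `σ > 0`, then for every `δ > 0` we have
`h_{P,δ}(x) < ρ + δ^{−d}·κ∞(σ/δ)`. -/
theorem kdeP_upper_bound_of_ball_subset_compl {d : ℕ} (hd : 0 < d)
    (N : (Fin d → ℝ) → ℝ) (hN : IsNormOn d N)
    (K : (Fin d → ℝ) → ℝ) (hK : IsSymmKernel d K)
    (P : Measure (Fin d → ℝ)) [IsProbabilityMeasure P]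
    (h : (Fin d → ℝ) → ℝ) (hdens : IsDensityOf d P h)
    (ρ : ℝ) (hρ : 0 ≤ ρ) (hnormal : NormalAtLevel d P h ρ)
    (x : Fin d → ℝ) (σ : ℝ) (hσ : 0 < σ)
    (hball : {y : Fin d → ℝ | N (y - x) ≤ σ} ⊆ (Mset d h ρ)ᶜ)
    (δ : ℝ) (hδ : 0 < δ) :
    kdeP d K δ P x < ρ + (δ ^ d)⁻¹ * kappaInf d N K (σ / δ) :=
  kdeP_upper_bound_of_ball_subset_compl_general N hN K hK P h hdens ρ hρ x σ hσ hball δ hδ
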